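/- arXiv:2104.09295 — 3 statements merged into one kernel-verified Lean document; each statement's English description precedes it below -/
import Mathlib

section
/- Let χ be a multiplicative character on Z/p^m, m ≥ 2, p an odd prime, with χ̂(1) ≠ 0. Then χ̂(a) = 0 for every a not in U(p^m); consequently χ̂(a) = G(χ)·χ*(a) for all a in Z/p^m, i.e., χ is primitive. -/
/-!
If `χ` is not primitive as a Dirichlet character of level `p ^ m`, its conductor is a proper
divisor of `p ^ m`, so `χ` factors through `p ^ (m - 1)`. Since `m ≥ 2`, every `c ∈ p ^ (m - 1) ℤ`
is nilpotent in `ZMod (p ^ m)`, so `b ↦ b + c` preserves units and `χ (b + c) = χ b`. Substituting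
`b ↦ b + c` in the Gauss sum multiplies it by `ψ c`, and primitivity of the additive character
gives some such `c` with `ψ c ≠ 1`; hence the Gauss sum vanishes. So `G(χ) ≠ 0` forces `χ` to be
primitive, and for primitive `χ` the twisted Gauss sums are `G(χ) χ⁻¹(a)`.
-/

open Finset

/-- The `N`-point discrete Fourier transform of `x : ZMod N → ℂ`. -/
noncomputable def dft {N : ℕ} [NeZero N] (x : ZMod N → ℂ) (a : ZMod N) : ℂ :=
  ∑ b : ZMod N, x b * Complex.exp (2 * Real.pi * Complex.I * ((a.val * b.val : ℕ) : ℂ) / (N : ℂ))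

lemma dft_eq_sum_stdAddChar {N : ℕ} [NeZero N] (x : ZMod N → ℂ) (a : ZMod N) :
    dft x a = ∑ b : ZMod N, x b * ZMod.stdAddChar (a * b) := by
  refine Finset.sum_congr rfl fun b _ => ?_
  have hab : a * b = (((a.val * b.val : ℕ) : ℤ) : ZMod N) := by
    push_cast [ZMod.natCast_val, ZMod.cast_id]
    rfl
  rw [hab, ZMod.stdAddChar_coe]
  push_cast
  rfl

lemma dft_mulChar_eq_gaussSum {N : ℕ} [NeZero N] (χ : MulChar (ZMod N) ℂ) (a : ZMod N) :
    dft χ a = gaussSum χ (ZMod.stdAddChar.mulShift a) := by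
  simp only [dft_eq_sum_stdAddChar, gaussSum, AddChar.mulShift_apply]

lemma gaussSum_eq_zero_of_map_add_eq {R R' : Type*} [CommRing R] [Fintype R] [CommRing R']
    [IsDomain R'] (χ : MulChar R R') (ψ : AddChar R R') {c : R}
    (hχ : ∀ b, χ (b + c) = χ b) (hψ : ψ c ≠ 1) : gaussSum χ ψ = 0 := by
  have hshift : gaussSum χ ψ = ψ c * gaussSum χ ψ := by
    calc gaussSum χ ψ = ∑ b, χ (b + c) * ψ (b + c) :=
          (Fintype.sum_equiv (Equiv.addRight c) _ _ fun _ => rfl).symm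
      _ = ψ c * gaussSum χ ψ := by
          simp only [hχ, AddChar.map_add_eq_mul, gaussSum, Finset.mul_sum]
          exact Finset.sum_congr rfl fun _ _ => by ring
  by_contra hG
  exact hψ ((mul_eq_right₀ hG).mp hshift.symm)

namespace DirichletCharacter

lemma FactorsThrough.map_add_of_isNilpotent {R : Type*} [CommMonoidWithZero R] {n d : ℕ}
    {χ : DirichletCharacter R n} (hχ : χ.FactorsThrough d) {c : ZMod n} (hc : IsNilpotent c)
    (hcd : (ZMod.cast c : ZMod d) = 0) (b : ZMod n) : χ (b + c) = χ b := by
  obtain ⟨hd, χ₀, rfl⟩ := hχ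
  by_cases hb : IsUnit b
  · obtain ⟨u, rfl⟩ := hb
    obtain ⟨v, hv⟩ := hc.isUnit_add_left_of_commute u.isUnit (Commute.all _ _)
    rw [← hv, changeLevel_eq_cast_of_dvd, changeLevel_eq_cast_of_dvd, hv, ZMod.cast_add hd, hcd,
      add_zero]
  · have hbc : ¬IsUnit (b + c) := fun h => hb (by
      simpa using hc.neg.isUnit_add_left_of_commute h (Commute.all _ _))
    rw [MulChar.map_nonunit _ hb, MulChar.map_nonunit _ hbc]

lemma factorsThrough_pow_pred_of_not_isPrimitive {R : Type*} [CommMonoidWithZero R] {p m : ℕ}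
    [Fact p.Prime] {χ : DirichletCharacter R (p ^ m)} (hχ : ¬χ.IsPrimitive) :
    χ.FactorsThrough (p ^ (m - 1)) := by
  obtain ⟨k, hkm, hk⟩ := (Nat.dvd_prime_pow Fact.out).mp χ.conductor_dvd_level
  have hkm' : k ≠ m := fun h => hχ (by rw [IsPrimitive, hk, h])
  exact FactorsThrough.mono χ (factorsThrough_conductor χ) (hk ▸ pow_dvd_pow p (by omega))
    (pow_dvd_pow p (Nat.sub_le m 1))

lemma isPrimitive_of_gaussSum_ne_zero {R : Type*} [CommRing R] [IsDomain R] {p m : ℕ}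
    [Fact p.Prime] (hm : 2 ≤ m) (χ : DirichletCharacter R (p ^ m))
    {ψ : AddChar (ZMod (p ^ m)) R} (hψ : ψ.IsPrimitive) (h : gaussSum χ ψ ≠ 0) :
    χ.IsPrimitive := by
  have hp : p.Prime := Fact.out
  by_contra hχ
  have hdvd : p ^ (m - 1) ∣ p ^ m := pow_dvd_pow p (Nat.sub_le m 1)
  set c : ZMod (p ^ m) := ((p ^ (m - 1) : ℕ) : ZMod (p ^ m))
  have hc : c ≠ 0 := by
    rw [ne_eq, ZMod.natCast_eq_zero_iff, Nat.pow_dvd_pow_iff_le_right hp.one_lt]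
    omega
  have hc_nil : IsNilpotent c := ⟨2, by
    rw [← Nat.cast_pow, ← pow_mul, ZMod.natCast_eq_zero_iff]
    exact pow_dvd_pow p (by omega)⟩
  obtain ⟨j, hj⟩ : ∃ j, ψ (c * j) ≠ 1 := by
    by_contra! hall
    exact hψ hc (AddChar.ext _ _ hall)
  have hcj : (ZMod.cast (c * j) : ZMod (p ^ (m - 1))) = 0 := by
    rw [ZMod.cast_mul hdvd, ZMod.cast_natCast hdvd, ZMod.natCast_self, zero_mul]
  exact h (gaussSum_eq_zero_of_map_add_eq χ ψ
    ((factorsThrough_pow_pred_of_not_isPrimitive hχ).map_add_of_isNilpotent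
      ((Commute.all c j).isNilpotent_mul_right hc_nil) hcj) hj)

end DirichletCharacter

theorem stmt3_general (p : ℕ) [Fact p.Prime] (m : ℕ) (hm : 2 ≤ m)
    (χ : MulChar (ZMod (p ^ m)) ℂ) (h : dft ⇑χ 1 ≠ 0) :
    (∀ a : ZMod (p ^ m), ¬IsUnit a → dft ⇑χ a = 0) ∧
    (∀ a : ZMod (p ^ m), dft ⇑χ a = dft ⇑χ 1 * χ⁻¹ a) := by
  have hχ : DirichletCharacter.IsPrimitive χ := by
    refine DirichletCharacter.isPrimitive_of_gaussSum_ne_zero hm χ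
      (ZMod.isPrimitive_stdAddChar _) ?_
    simpa [dft_mulChar_eq_gaussSum] using h
  have hdft (a : ZMod (p ^ m)) : dft χ a = dft χ 1 * χ⁻¹ a := by
    rw [dft_mulChar_eq_gaussSum, dft_mulChar_eq_gaussSum, AddChar.mulShift_one, mul_comm,
      gaussSum_mulShift_of_isPrimitive _ hχ]
  refine ⟨fun a ha => ?_, hdft⟩
  rw [hdft, MulChar.map_nonunit _ ha, mul_zero]

theorem stmt3 (p : ℕ) [Fact p.Prime] (hp : p ≠ 2) (m : ℕ) (hm : 2 ≤ m)
    (χ : MulChar (ZMod (p ^ m)) ℂ) (h : dft ⇑χ 1 ≠ 0) :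
    (∀ a : ZMod (p ^ m), ¬IsUnit a → dft ⇑χ a = 0) ∧
    (∀ a : ZMod (p ^ m), dft ⇑χ a = dft ⇑χ 1 * χ⁻¹ a) :=
  stmt3_general p m hm χ h
end

section
/- Let p and q = p+2 be twin primes and y_{pq} the Golomb sequence of period pq with α = e^{iΦ}, cos Φ = −(pq−1)/(pq+1). Then |ŷ_{pq}(m)| is constant in m, i.e., the Golomb sequence has ideal (flat-magnitude) DFT, equivalently ideal periodic autocorrelation. -/
/-!
Let `χ_p`, `χ_q` be the quadratic characters. Through the Chinese remainder isomorphism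
`ZMod (p * q) ≃ ZMod p × ZMod q`, the `±1` sequence that is `1` exactly where `x = 1` becomes
`ε(a, b) = -χ_p(a) χ_q(b)` on units, `1` on `{0} × units` and `-1` on `ZMod p × {0}`. This is a
combination of products `f(a) g(b)` of `χ`, the delta at `0` and the constant `1`, so its periodic
autocorrelation reduces to one-dimensional ones; the only non-trivial one,
`∑ n, χ(n) χ(n + s) = -1` for `s ≠ 0`, is a Jacobi sum. As `χ_p(-1) χ_q(-1) = -1` for
`q = p + 2`, the autocorrelation of `ε` is `N = p q` at `0` and `-1` elsewhere.

Then `y = (1 + α)/2 + (1 - α)/2 • ε` with `|α| = 1`, and `Re α = -(N - 1)/(N + 1)` is exactly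
what makes the autocorrelation of `y` vanish off `0`. Hence `|ŷ|²`, the Fourier transform of
that autocorrelation, is the constant `N`.
-/

open Finset

section Correlation

variable {G H R : Type*} [AddCommGroup G] [Fintype G] [AddCommGroup H] [Fintype H] [CommRing R]

def corr (f g : G → R) (τ : G) : R := ∑ n, f n * g (n + τ)

@[simp] lemma corr_add_left (f f' g : G → R) (τ : G) :
    corr (f + f') g τ = corr f g τ + corr f' g τ := by
  simp [corr, add_mul, sum_add_distrib]

@[simp] lemma corr_add_right (f g g' : G → R) (τ : G) :
    corr f (g + g') τ = corr f g τ + corr f g' τ := by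
  simp [corr, mul_add, sum_add_distrib]

@[simp] lemma corr_neg_left (f g : G → R) (τ : G) : corr (-f) g τ = -corr f g τ := by
  simp [corr]

@[simp] lemma corr_neg_right (f g : G → R) (τ : G) : corr f (-g) τ = -corr f g τ := by
  simp [corr]

@[simp] lemma corr_sub_left (f f' g : G → R) (τ : G) :
    corr (f - f') g τ = corr f g τ - corr f' g τ := by
  simp [sub_eq_add_neg]

@[simp] lemma corr_sub_right (f g g' : G → R) (τ : G) :
    corr f (g - g') τ = corr f g τ - corr f g' τ := by
  simp [sub_eq_add_neg]

@[simp] lemma corr_one_left (g : G → R) (τ : G) : corr 1 g τ = ∑ n, g n := by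
  simp only [corr, Pi.one_apply, one_mul]
  exact Equiv.sum_comp (Equiv.addRight τ) g

@[simp] lemma corr_one_right (f : G → R) (τ : G) : corr f 1 τ = ∑ n, f n := by
  simp [corr]

@[simp] lemma corr_single_left [DecidableEq G] (g : G → R) (τ : G) :
    corr (Pi.single 0 1) g τ = g τ := by
  simp [corr, Pi.single_apply]

@[simp] lemma corr_single_right [DecidableEq G] (f : G → R) (τ : G) :
    corr f (Pi.single 0 1) τ = f (-τ) := by
  simp [corr, Pi.single_apply, add_eq_zero_iff_eq_neg]

lemma corr_comp_addEquiv (e : G ≃+ H) (f g : H → R) (τ : G) :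
    corr (f ∘ e) (g ∘ e) τ = corr f g (e τ) := by
  simp only [corr, Function.comp_apply, map_add]
  exact e.toEquiv.sum_comp (fun z => f z * g (z + e τ))

lemma corr_prod (f f' : G → R) (g g' : H → R) (s : G) (t : H) :
    corr (fun z : G × H => f z.1 * g z.2) (fun z => f' z.1 * g' z.2) (s, t) =
      corr f f' s * corr g g' t := by
  simp only [corr, Fintype.sum_prod_type, sum_mul_sum, Prod.fst_add, Prod.snd_add]
  exact sum_congr rfl fun _ _ => sum_congr rfl fun _ _ => by ring

end Correlation

section QuadraticChar

variable {F : Type*} [Field F] [Fintype F] [DecidableEq F]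

lemma corr_quadraticChar_self_zero :
    corr (quadraticChar F) (quadraticChar F) 0 = Fintype.card F - 1 := by
  have hterm : ∀ n : F,
      quadraticChar F n * quadraticChar F (n + 0) = 1 - if n = 0 then 1 else 0 := by
    intro n
    split_ifs with hn
    · simp [hn]
    · rw [add_zero, ← sq, quadraticChar_sq_one hn, sub_zero]
  rw [corr, sum_congr rfl fun n _ => hterm n, sum_sub_distrib]
  simp

lemma corr_quadraticChar_self_of_ne_zero (hF : ringChar F ≠ 2) {s : F} (hs : s ≠ 0) :
    corr (quadraticChar F) (quadraticChar F) s = -1 := by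
  set χ := quadraticChar F
  have hχ : χ (-1) ^ 2 = 1 := quadraticChar_sq_one (neg_ne_zero.mpr one_ne_zero)
  have hjacobi : jacobiSum χ χ = -χ (-1) := by
    simpa only [quadraticChar_isQuadratic F |>.inv] using
      jacobiSum_nontrivial_inv (quadraticChar_ne_one hF)
  -- substitute `n = -s * x`, so that `n + s = s * (1 - x)`
  have hsub : ∀ x : F, χ (-s * x) * χ (-s * x + s) = χ (-1) * (χ x * χ (1 - x)) := by
    intro x
    rw [show -s * x + s = s * (1 - x) by ring, show -s * x = -1 * s * x by ring]
    simp only [map_mul]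
    linear_combination (χ (-1) * χ x * χ (1 - x)) * quadraticChar_sq_one hs
  rw [corr, ← Equiv.sum_comp (Equiv.mulLeft₀ (-s) (neg_ne_zero.mpr hs))]
  simp only [Equiv.mulLeft₀_apply, hsub, ← mul_sum]
  rw [← jacobiSum, hjacobi]
  linear_combination -hχ

lemma corr_quadraticChar_self (hF : ringChar F ≠ 2) (s : F) :
    corr (quadraticChar F) (quadraticChar F) s =
      if s = 0 then (Fintype.card F : ℤ) - 1 else -1 := by
  split_ifs with hs
  · rw [hs, corr_quadraticChar_self_zero]
  · exact corr_quadraticChar_self_of_ne_zero hF hs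

lemma quadraticChar_neg_one_mul_of_card_eq_add_two {K : Type*} [Field K] [Fintype K]
    [DecidableEq K] (hF : ringChar F ≠ 2) (hK : ringChar K ≠ 2)
    (hcard : Fintype.card K = Fintype.card F + 2) :
    quadraticChar F (-1) * quadraticChar K (-1) = -1 := by
  have hodd := FiniteField.odd_card_of_char_ne_two hF
  rw [quadraticChar_neg_one hF, quadraticChar_neg_one hK, hcard, ZMod.χ₄_nat_eq_if_mod_four,
    ZMod.χ₄_nat_eq_if_mod_four]
  have : Fintype.card F % 4 = 1 ∨ Fintype.card F % 4 = 3 := by omega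
  rcases this with h | h <;> simp [h, Nat.add_mod, hodd]

end QuadraticChar

section TwinPrimeSeq

variable (F K : Type*) [Field F] [Fintype F] [DecidableEq F] [Field K] [Fintype K] [DecidableEq K]

def twinPrimeSeq (z : F × K) : ℤ :=
  if z.2 = 0 then -1 else if z.1 = 0 then 1 else -(quadraticChar F z.1 * quadraticChar K z.2)

lemma twinPrimeSeq_eq_one_or_eq_neg_one (z : F × K) :
    twinPrimeSeq F K z = 1 ∨ twinPrimeSeq F K z = -1 := by
  unfold twinPrimeSeq
  split_ifs with h2 h1
  · exact Or.inr rfl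
  · exact Or.inl rfl
  · rcases quadraticChar_dichotomy h1 with h | h <;>
      rcases quadraticChar_dichotomy h2 with h' | h' <;> simp [h, h']

lemma twinPrimeSeq_eq_tensor :
    twinPrimeSeq F K =
      -(fun z => quadraticChar F z.1 * quadraticChar K z.2) +
      (fun z => (Pi.single 0 1 + 1 : F → ℤ) z.1 * (1 - Pi.single 0 1 : K → ℤ) z.2) -
      (fun z => (1 : F → ℤ) z.1 * (1 : K → ℤ) z.2) := by
  ext ⟨a, b⟩
  by_cases hb : b = 0 <;> by_cases ha : a = 0 <;> simp [twinPrimeSeq, ha, hb]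

variable {F K}

lemma corr_twinPrimeSeq (hF : ringChar F ≠ 2) (hK : ringChar K ≠ 2)
    (hcard : Fintype.card K = Fintype.card F + 2) (w : F × K) :
    corr (twinPrimeSeq F K) (twinPrimeSeq F K) w =
      if w = 0 then (Fintype.card F * Fintype.card K : ℤ) else -1 := by
  obtain ⟨s, t⟩ := w
  have hodd : quadraticChar F (-s) * quadraticChar K (-t) =
      -(quadraticChar F s * quadraticChar K t) := by
    rw [neg_eq_neg_one_mul s, neg_eq_neg_one_mul t, map_mul, map_mul]
    linear_combination (quadraticChar F s * quadraticChar K t) *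
      quadraticChar_neg_one_mul_of_card_eq_add_two hF hK hcard
  rw [twinPrimeSeq_eq_tensor]
  simp only [corr_add_left, corr_add_right, corr_sub_left, corr_sub_right, corr_neg_left,
    corr_neg_right, corr_prod]
  simp only [corr_quadraticChar_self hF, corr_quadraticChar_self hK,
    corr_single_left, corr_single_right, corr_one_left, corr_one_right, quadraticChar_sum_zero hF,
    quadraticChar_sum_zero hK, Pi.single_apply, Fintype.sum_ite_eq', sum_const, card_univ,
    nsmul_eq_mul, mul_one, Pi.one_apply, neg_eq_zero, Prod.mk_eq_zero, ite_and, hcard]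
  split_ifs <;> push_cast <;> linear_combination hodd

lemma corr_twinPrimeSeq_comp_addEquiv {G : Type*} [AddCommGroup G] [Fintype G] [DecidableEq G]
    (hF : ringChar F ≠ 2) (hK : ringChar K ≠ 2) (hcard : Fintype.card K = Fintype.card F + 2)
    (φ : G ≃+ F × K) (τ : G) :
    corr (twinPrimeSeq F K ∘ φ) (twinPrimeSeq F K ∘ φ) τ =
      if τ = 0 then (Fintype.card G : ℤ) else -1 := by
  rw [corr_comp_addEquiv, corr_twinPrimeSeq hF hK hcard, Fintype.card_congr φ.toEquiv,
    Fintype.card_prod]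
  simp

end TwinPrimeSeq

section Spectrum

variable {G : Type*} [AddCommGroup G] [Fintype G]

lemma sum_mul_addChar_mul_star (ψ : AddChar G ℂ) (y : G → ℂ) :
    (∑ b, y b * ψ b) * star (∑ b, y b * ψ b) = ∑ τ, corr (star y) y τ * ψ τ := by
  rw [star_sum, sum_mul_sum, sum_comm]
  simp only [corr, sum_mul]
  conv_rhs => rw [sum_comm]
  refine sum_congr rfl fun c _ => ?_
  rw [← Equiv.sum_comp (Equiv.addLeft c)]
  refine sum_congr rfl fun τ _ => ?_
  have hψ : ψ (c + τ) * star (ψ c) = ψ τ := by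
    rw [Complex.star_def, ← AddChar.map_neg_eq_conj, ← AddChar.map_add_eq_mul,
      add_neg_cancel_comm]
  simp only [Equiv.coe_addLeft, star_mul', Pi.star_apply]
  rw [← hψ]
  ring

lemma norm_sq_sum_mul_addChar_of_corr_eq_ite [DecidableEq G] (ψ : AddChar G ℂ) (y : G → ℂ)
    (c : ℂ) (h : ∀ τ, corr (star y) y τ = if τ = 0 then c else 0) :
    ((‖∑ b, y b * ψ b‖ ^ 2 : ℝ) : ℂ) = c := by
  have := sum_mul_addChar_mul_star ψ y
  simp only [h, ite_mul, zero_mul, sum_ite_eq', mem_univ, if_true, AddChar.map_zero_eq_one,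
    mul_one, Complex.star_def, Complex.mul_conj'] at this
  exact_mod_cast this

def golombSeq (α : ℂ) (ε : G → ℤ) (n : G) : ℂ := if ε n = 1 then 1 else α

lemma corr_star_golombSeq [DecidableEq G] {α : ℂ} {ε : G → ℤ}
    (hε : ∀ n, ε n = 1 ∨ ε n = -1)
    (hcorr : ∀ τ, corr ε ε τ = if τ = 0 then (Fintype.card G : ℤ) else -1)
    (hα : ‖α‖ = 1) (hre : α.re = -((Fintype.card G - 1) / (Fintype.card G + 1))) (τ : G) :
    corr (star (golombSeq α ε)) (golombSeq α ε) τ =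
      if τ = 0 then (Fintype.card G : ℂ) else 0 := by
  set N : ℂ := (Fintype.card G : ℂ)
  have haffine : ∀ n, golombSeq α ε n = (1 + α) / 2 + (1 - α) / 2 * ε n := by
    intro n
    rcases hε n with h | h <;> simp [golombSeq, h] <;> ring
  have hunit : α * star α = 1 := by
    rw [Complex.star_def, Complex.mul_conj', hα]; norm_num
  have hsum : (α + star α) * (N + 1) = -2 * (N - 1) := by
    have hN : N + 1 ≠ 0 := Nat.cast_add_one_ne_zero _
    rw [Complex.star_def, Complex.add_conj, hre]
    push_cast
    field_simp
    ring
  have hshift : ∑ n, (ε (n + τ) : ℂ) = ∑ n, (ε n : ℂ) :=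
    Equiv.sum_comp (Equiv.addRight τ) (fun n => (ε n : ℂ))
  have hcorrC : ∑ n, (ε n : ℂ) * ε (n + τ) = if τ = 0 then N else -1 := by
    simpa [corr, apply_ite, N] using congrArg (Int.cast : ℤ → ℂ) (hcorr τ)
  calc corr (star (golombSeq α ε)) (golombSeq α ε) τ
      = ∑ n, ((1 + star α) / 2 * ((1 + α) / 2)
          + (1 + star α) / 2 * ((1 - α) / 2) * ε (n + τ)
          + (1 - star α) / 2 * ((1 + α) / 2) * ε n
          + (1 - star α) / 2 * ((1 - α) / 2) * (ε n * ε (n + τ))) := by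
        refine sum_congr rfl fun n _ => ?_
        simp only [Pi.star_apply, haffine, star_add, star_mul', star_div₀, star_one, star_sub,
          star_intCast, star_ofNat]
        ring
    _ = N * ((1 + star α) / 2 * ((1 + α) / 2))
          + ((1 + star α) * (1 - α) + (1 - star α) * (1 + α)) / 4 * ∑ n, (ε n : ℂ)
          + (1 - star α) / 2 * ((1 - α) / 2) * (if τ = 0 then N else -1) := by
        simp only [sum_add_distrib, ← mul_sum, hshift, hcorrC, sum_const, card_univ, nsmul_eq_mul]
        ring
    _ = if τ = 0 then N else 0 := by
        split_ifs
        · linear_combination (N / 2 - (∑ n, (ε n : ℂ)) / 2) * hunit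
        · linear_combination ((N - 1) / 4 - (∑ n, (ε n : ℂ)) / 2) * hunit + (1 / 4) * hsum

end Spectrum

lemma dft_eq_sum_mul_stdAddChar {N : ℕ} [NeZero N] (x : ZMod N → ℂ) (a : ZMod N) :
    dft x a = ∑ b, x b * ZMod.stdAddChar.mulShift a b := by
  refine sum_congr rfl fun b _ => ?_
  rw [AddChar.mulShift_apply, ZMod.stdAddChar_apply, ← ZMod.natCast_zmod_val (a * b),
    ZMod.val_mul, ZMod.natCast_mod, ZMod.toCircle_natCast]

lemma norm_exp_I_mul_arccos (x : ℝ) : ‖Complex.exp (Complex.I * Real.arccos x)‖ = 1 := by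
  rw [mul_comm, Complex.norm_exp_ofReal_mul_I]

lemma re_exp_I_mul_arccos {x : ℝ} (hx : |x| ≤ 1) :
    (Complex.exp (Complex.I * Real.arccos x)).re = x := by
  rw [mul_comm, Complex.exp_ofReal_mul_I_re, Real.cos_arccos (abs_le.1 hx).1 (abs_le.1 hx).2]

lemma abs_sub_one_div_add_one_le {N : ℝ} (hN : 0 ≤ N) : |(N - 1) / (N + 1)| ≤ 1 := by
  rw [abs_div, abs_of_pos (by linarith : 0 < N + 1), div_le_one (by linarith), abs_le]
  constructor <;> linarith

noncomputable def modifiedJacobi (p q : ℕ) [Fact p.Prime] [Fact q.Prime] (n : ZMod (p * q)) :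
    ℂ :=
  if n = 0 then 0
  else if p ∣ n.val ∧ ¬ q ∣ n.val then 1
  else if q ∣ n.val then 0
  else (1 - ((legendreSym p (n.val : ℤ) * legendreSym q (n.val : ℤ) : ℤ) : ℂ)) / 2

lemma chineseRemainder_eq_natCast_val {m n : ℕ} [NeZero (m * n)] (h : m.Coprime n)
    (k : ZMod (m * n)) : ZMod.chineseRemainder h k = (k.val : ZMod m × ZMod n) := by
  conv_lhs => rw [← ZMod.natCast_zmod_val k]
  exact map_natCast _ _

lemma modifiedJacobi_eq_one_iff {p q : ℕ} [Fact p.Prime] [Fact q.Prime] (hpq : p.Coprime q)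
    (n : ZMod (p * q)) :
    modifiedJacobi p q n = 1 ↔
      twinPrimeSeq (ZMod p) (ZMod q) (ZMod.chineseRemainder hpq n) = 1 := by
  set z := ZMod.chineseRemainder hpq n with hz
  have hn0 : n = 0 ↔ z.1 = 0 ∧ z.2 = 0 := by
    rw [← Prod.mk_eq_zero, ← (map_eq_zero_iff _ (ZMod.chineseRemainder hpq).injective)]
  have hpz : p ∣ n.val ↔ z.1 = 0 := by
    rw [hz, chineseRemainder_eq_natCast_val, Prod.fst_natCast, ZMod.natCast_eq_zero_iff]
  have hqz : q ∣ n.val ↔ z.2 = 0 := by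
    rw [hz, chineseRemainder_eq_natCast_val, Prod.snd_natCast, ZMod.natCast_eq_zero_iff]
  have hlp : legendreSym p n.val = quadraticChar (ZMod p) z.1 := by
    rw [legendreSym, hz, chineseRemainder_eq_natCast_val, Prod.fst_natCast, Int.cast_natCast]
  have hlq : legendreSym q n.val = quadraticChar (ZMod q) z.2 := by
    rw [legendreSym, hz, chineseRemainder_eq_natCast_val, Prod.snd_natCast, Int.cast_natCast]
  simp only [modifiedJacobi, twinPrimeSeq, hn0, hpz, hqz, hlp, hlq]
  by_cases hb : z.2 = 0
  · simp [hb]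
  by_cases ha : z.1 = 0
  · simp [ha, hb]
  rcases quadraticChar_dichotomy ha with h | h <;>
    rcases quadraticChar_dichotomy hb with h' | h' <;> norm_num [ha, hb, h, h']

theorem stmt13 (p q : ℕ) [Fact p.Prime] [Fact q.Prime] (hp2 : p ≠ 2) (hq : q = p + 2)
    (x : ZMod (p * q) → ℂ)
    (hx : ∀ n : ZMod (p * q), x n =
      if n = 0 then 0
      else if p ∣ n.val ∧ ¬ q ∣ n.val then 1
      else if q ∣ n.val then 0
      else (1 - ((legendreSym p (n.val : ℤ) * legendreSym q (n.val : ℤ) : ℤ) : ℂ)) / 2)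
    (α : ℂ)
    (hα : α = Complex.exp (Complex.I *
      (Real.arccos (-(((p : ℝ) * q - 1) / ((p : ℝ) * q + 1))) : ℝ)))
    (y : ZMod (p * q) → ℂ) (hy : ∀ n, y n = if x n = 1 then 1 else α)
    (m₁ m₂ : ZMod (p * q)) :
    ‖dft y m₁‖ = ‖dft y m₂‖ := by
  have hp : p.Prime := Fact.out
  have hpq : p.Coprime q := (Nat.coprime_primes hp Fact.out).2 (by omega)
  have hF : ringChar (ZMod p) ≠ 2 := by rwa [ZMod.ringChar_zmod_n]
  have hK : ringChar (ZMod q) ≠ 2 := by rw [ZMod.ringChar_zmod_n, hq]; have := hp.pos; omega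
  have hcard : Fintype.card (ZMod q) = Fintype.card (ZMod p) + 2 := by simp [ZMod.card, hq]
  set ε := twinPrimeSeq (ZMod p) (ZMod q) ∘ (ZMod.chineseRemainder hpq).toAddEquiv
  have hxJ : x = modifiedJacobi p q := funext hx
  have hyε : y = golombSeq α ε := funext fun n => by
    rw [hy, hxJ]
    exact if_congr (modifiedJacobi_eq_one_iff hpq n) rfl rfl
  have hN : (Fintype.card (ZMod (p * q)) : ℝ) = p * q := by simp [ZMod.card]
  have hre : α.re = -((Fintype.card (ZMod (p * q)) - 1) / (Fintype.card (ZMod (p * q)) + 1)) := by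
    rw [hN, hα, re_exp_I_mul_arccos]
    rw [abs_neg]
    exact abs_sub_one_div_add_one_le (by positivity)
  have hflat : ∀ m, ((‖dft y m‖ ^ 2 : ℝ) : ℂ) = Fintype.card (ZMod (p * q)) := fun m => by
    rw [dft_eq_sum_mul_stdAddChar, hyε]
    exact norm_sq_sum_mul_addChar_of_corr_eq_ite _ _ _ <| corr_star_golombSeq
      (fun n => twinPrimeSeq_eq_one_or_eq_neg_one _ _ _)
      (corr_twinPrimeSeq_comp_addEquiv hF hK hcard _) (hα ▸ norm_exp_I_mul_arccos _) hre
  have hsq := Complex.ofReal_injective ((hflat m₁).trans (hflat m₂).symm)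
  exact (pow_left_inj₀ (norm_nonneg _) (norm_nonneg _) two_ne_zero).1 hsq
end

section
/- Let N = R₁R₂, gcd(R₁,R₂) = 1, χ₁, χ₂ multiplicative characters on Z/R₁, Z/R₂ with χ₂ primitive, and χ the corresponding character on Z/N. Then the R₁×R₂ finite Zak transform X_{R₂}(j,k) = Σ_{r=0}^{R₂−1} χ(k + rR₁) e^{2πi jr/R₂} satisfies X_{R₂}(j,k) = G(χ₂)·χ₂(R₁)·e^{−2πi R₁^{-1}jk/R₂}·χ₂*(j)·χ₁(k) for 0 ≤ j < R₂, 0 ≤ k < R₁, where R₁^{-1} is the inverse of R₁ mod R₂. -/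
/-!
The substitution `b = k + r R₁` (a bijection of `ZMod R₂`, since `R₁` is a unit there) turns the
Zak sum into `χ₁(k)` times a DFT of `χ₂` at `j R₁⁻¹`, up to the phase `e(-j R₁⁻¹ k / R₂)`.
Primitivity evaluates that DFT as `G(χ₂) χ₂⁻¹(j R₁⁻¹) = G(χ₂) χ₂(R₁) χ₂⁻¹(j)`.
-/

open Finset

lemma ZMod.stdAddChar_natCast {N : ℕ} [NeZero N] (m : ℕ) :
    ZMod.stdAddChar (m : ZMod N) = Complex.exp (2 * Real.pi * Complex.I * m / N) := by
  rw [ZMod.stdAddChar_apply, ZMod.toCircle_natCast]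

lemma ZMod.sum_range_natCast {M : Type*} [AddCommMonoid M] (n : ℕ) [NeZero n] (f : ZMod n → M) :
    ∑ r ∈ range n, f r = ∑ x : ZMod n, f x :=
  sum_nbij' (fun r => (r : ZMod n)) ZMod.val (fun _ _ => mem_univ _)
    (fun x _ => mem_range.mpr (ZMod.val_lt x))
    (fun _ hr => ZMod.val_cast_of_lt (mem_range.mp hr)) (fun x _ => ZMod.natCast_zmod_val x)
    (fun _ _ => rfl)

lemma AddChar.sum_affine_mul_map {R M : Type*} [CommRing R] [Fintype R] [CommSemiring M]
    (ψ : AddChar R M) (f : R → M) (a : Rˣ) (j k : R) :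
    ∑ r, f (k + r * a) * ψ (j * r) = ψ (-(j * ↑a⁻¹ * k)) * ∑ b, f b * ψ (j * ↑a⁻¹ * b) := by
  rw [mul_sum]
  refine Fintype.sum_equiv ((Units.mulRight a).trans (Equiv.addLeft k)) _ _ fun r => ?_
  have hphase : j * r = -(j * ↑a⁻¹ * k) + j * ↑a⁻¹ * (k + r * a) := by
    linear_combination (-(j * r)) * a.inv_mul
  simp only [Equiv.trans_apply, Units.mulRight_apply, Equiv.coe_addLeft]
  rw [hphase, AddChar.map_add_eq_mul]
  ring

lemma MulChar.inv_apply_mul_unit_inv {R M : Type*} [CommMonoidWithZero R] [CommMonoidWithZero M]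
    (χ : MulChar R M) (x : R) (a : Rˣ) : χ⁻¹ (x * ↑a⁻¹) = χ⁻¹ x * χ a := by
  rw [map_mul, MulChar.inv_apply χ (↑a⁻¹ : R), Ring.inverse_unit, inv_inv]

theorem stmt15_general (R₁ R₂ : ℕ) [NeZero R₂] (h : Nat.Coprime R₁ R₂)
    (χ₁ : MulChar (ZMod R₁) ℂ) (χ₂ : MulChar (ZMod R₂) ℂ)
    (χ : MulChar (ZMod (R₁ * R₂)) ℂ)
    (hχ : ∀ a : ZMod (R₁ * R₂),
      χ a = χ₁ (ZMod.castHom (dvd_mul_right R₁ R₂) (ZMod R₁) a) *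
            χ₂ (ZMod.castHom (dvd_mul_left R₂ R₁) (ZMod R₂) a))
    (hprim : ∀ j : ZMod R₂, dft ⇑χ₂ j = dft ⇑χ₂ 1 * χ₂⁻¹ j)
    (j k : ℕ) :
    ∑ r ∈ Finset.range R₂, χ ((k + r * R₁ : ℕ) : ZMod (R₁ * R₂)) *
        Complex.exp (2 * Real.pi * Complex.I * ((j * r : ℕ) : ℂ) / (R₂ : ℂ)) =
      dft ⇑χ₂ 1 * χ₂ ((R₁ : ℕ) : ZMod R₂) *
        Complex.exp (-(2 * Real.pi * Complex.I *
          (((((R₁ : ZMod R₂)⁻¹).val * j * k : ℕ)) : ℂ) / (R₂ : ℂ))) *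
        χ₂⁻¹ ((j : ℕ) : ZMod R₂) * χ₁ ((k : ℕ) : ZMod R₁) := by
  set a := ZMod.unitOfCoprime R₁ h
  have hcrt (r : ℕ) : χ ((k + r * R₁ : ℕ) : ZMod (R₁ * R₂)) =
      χ₁ (k : ZMod R₁) * χ₂ ((k : ZMod R₂) + (r : ZMod R₂) * a) := by
    simp [hχ, a]
  have hzak : ∑ r ∈ range R₂, χ ((k + r * R₁ : ℕ) : ZMod (R₁ * R₂)) *
        Complex.exp (2 * Real.pi * Complex.I * ((j * r : ℕ) : ℂ) / (R₂ : ℂ)) =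
      χ₁ (k : ZMod R₁) *
        ∑ r : ZMod R₂, χ₂ ((k : ZMod R₂) + r * a) * ZMod.stdAddChar ((j : ZMod R₂) * r) := by
    rw [mul_sum, ← ZMod.sum_range_natCast]
    refine sum_congr rfl fun r _ => ?_
    rw [hcrt, ← ZMod.stdAddChar_natCast, Nat.cast_mul, mul_assoc]
  have hphase : ZMod.stdAddChar (N := R₂) (-(j * ↑a⁻¹ * k)) =
      Complex.exp (-(2 * Real.pi * Complex.I *
        (((((R₁ : ZMod R₂)⁻¹).val * j * k : ℕ)) : ℂ) / (R₂ : ℂ))) := by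
    have hval : (j : ZMod R₂) * ↑a⁻¹ * k = (((R₁ : ZMod R₂)⁻¹.val * j * k : ℕ) : ZMod R₂) := by
      rw [← ZMod.coe_unitOfCoprime R₁ h, ZMod.inv_coe_unit]
      push_cast [ZMod.natCast_val, ZMod.cast_id]
      ring
    rw [hval, AddChar.map_neg_eq_inv, ZMod.stdAddChar_natCast, Complex.exp_neg]
  rw [hzak, AddChar.sum_affine_mul_map, ← dft_eq_sum_stdAddChar, hprim,
    MulChar.inv_apply_mul_unit_inv, hphase, ZMod.coe_unitOfCoprime]
  ring

theorem stmt15 (R₁ R₂ : ℕ) [NeZero R₁] [NeZero R₂] (h : Nat.Coprime R₁ R₂)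
    (χ₁ : MulChar (ZMod R₁) ℂ) (χ₂ : MulChar (ZMod R₂) ℂ)
    (χ : MulChar (ZMod (R₁ * R₂)) ℂ)
    (hχ : ∀ a : ZMod (R₁ * R₂),
      χ a = χ₁ (ZMod.castHom (dvd_mul_right R₁ R₂) (ZMod R₁) a) *
            χ₂ (ZMod.castHom (dvd_mul_left R₂ R₁) (ZMod R₂) a))
    (hprim : ∀ j : ZMod R₂, dft ⇑χ₂ j = dft ⇑χ₂ 1 * χ₂⁻¹ j)
    (j k : ℕ) (hj : j < R₂) (hk : k < R₁) :
    ∑ r ∈ Finset.range R₂, χ ((k + r * R₁ : ℕ) : ZMod (R₁ * R₂)) *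
        Complex.exp (2 * Real.pi * Complex.I * ((j * r : ℕ) : ℂ) / (R₂ : ℂ)) =
      dft ⇑χ₂ 1 * χ₂ ((R₁ : ℕ) : ZMod R₂) *
        Complex.exp (-(2 * Real.pi * Complex.I *
          (((((R₁ : ZMod R₂)⁻¹).val * j * k : ℕ)) : ℂ) / (R₂ : ℂ))) *
        χ₂⁻¹ ((j : ℕ) : ZMod R₂) * χ₁ ((k : ℕ) : ZMod R₁) :=
  stmt15_general R₁ R₂ h χ₁ χ₂ χ hχ hprim j k
end
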